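/- Suppose P_G decomposes via a hyperplane H (through the origin with normal vector a). If e is a positive edge (a·ρ(e) > 0) and f is a negative edge (a·ρ(f) < 0), then e and f are cycle-compatible via a 4-cycle (e,g,f,h) in which both connecting edges g and h are zero edges (a·ρ(g) = a·ρ(h) = 0). In particular, a positive edge and a negative edge cannot share a vertex. -/
import Mathlib


open scoped BigOperators

/-- `ρ(i,j) = e_i + e_j` -/
noncomputable def rho {d : ℕ} (i j : Fin d) : Fin d → ℝ :=
  fun t => (if t = i then 1 else 0) + (if t = j then 1 else 0)

/-- The edge polytope of a graph `G` on `[d]`. -/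
noncomputable def edgePolytope {d : ℕ} (G : SimpleGraph (Fin d)) : Set (Fin d → ℝ) :=
  convexHull ℝ {x | ∃ i j, G.Adj i j ∧ x = rho i j}

/-- dot product -/
def dotp {d : ℕ} (a x : Fin d → ℝ) : ℝ := ∑ t, a t * x t

/-- a polytope is integral if all its vertices (extreme points) are lattice points -/
def IsIntegralSet {d : ℕ} (P : Set (Fin d → ℝ)) : Prop :=
  ∀ x ∈ Set.extremePoints ℝ P, ∀ t, ∃ z : ℤ, x t = (z : ℝ)

/-- The hyperplane `a·x = b` decomposes `P`: it meets the relative interior of `P`,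
both open sides meet `P`, and both closed half-space pieces are integral. -/
def Decomposes {d : ℕ} (P : Set (Fin d → ℝ)) (a : Fin d → ℝ) (b : ℝ) : Prop :=
  (∃ x ∈ intrinsicInterior ℝ P, dotp a x = b) ∧
  (∃ y ∈ P, dotp a y < b) ∧ (∃ y ∈ P, b < dotp a y) ∧
  IsIntegralSet (P ∩ {x | b ≤ dotp a x}) ∧
  IsIntegralSet (P ∩ {x | dotp a x ≤ b})

section aux

variable {d : ℕ}

lemma dotp_add (a x y : Fin d → ℝ) : dotp a (x + y) = dotp a x + dotp a y := by
  simp [dotp, mul_add, Finset.sum_add_distrib]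

lemma dotp_smul (a : Fin d → ℝ) (c : ℝ) (x : Fin d → ℝ) : dotp a (c • x) = c * dotp a x := by
  simp [dotp, Finset.mul_sum, mul_left_comm]

lemma isLinearMap_dotp (a : Fin d → ℝ) : IsLinearMap ℝ (dotp a) :=
  ⟨dotp_add a, fun c x => dotp_smul a c x⟩

lemma dotp_rho (a : Fin d → ℝ) {i j : Fin d} (h : i ≠ j) : dotp a (rho i j) = a i + a j := by
  simp [dotp, rho, mul_add, Finset.sum_add_distrib, mul_ite, mul_one, mul_zero,
    Finset.sum_ite_eq', h]

lemma rho_comm (i j : Fin d) : rho i j = rho j i := by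
  funext t; simp [rho, add_comm]

lemma rho_mem (G : SimpleGraph (Fin d)) {i j : Fin d} (h : G.Adj i j) :
    rho i j ∈ edgePolytope G :=
  subset_convexHull ℝ _ ⟨i, j, h, rfl⟩

lemma hull_le (G : SimpleGraph (Fin d)) (c : Fin d → ℝ) (M : ℝ)
    (hle : ∀ p q, G.Adj p q → c p + c q ≤ M) :
    ∀ x ∈ edgePolytope G, dotp c x ≤ M := by
  intro x hx
  have hsub : edgePolytope G ⊆ {x | dotp c x ≤ M} := by
    apply convexHull_min
    · rintro v ⟨p, q, hpq, rfl⟩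
      simpa [dotp_rho c hpq.ne] using hle p q hpq
    · exact convex_halfSpace_le (isLinearMap_dotp c) M
  exact hsub hx

lemma face_lemma (G : SimpleGraph (Fin d)) (c : Fin d → ℝ) (M : ℝ)
    (e f : Fin d → ℝ)
    (hle : ∀ p q, G.Adj p q → c p + c q ≤ M)
    (heq : ∀ p q, G.Adj p q → c p + c q = M → rho p q = e ∨ rho p q = f)
    {x : Fin d → ℝ} (hx : x ∈ edgePolytope G) (hxM : dotp c x = M) :
    x ∈ convexHull ℝ ({e, f} : Set (Fin d → ℝ)) := by
  rw [edgePolytope, convexHull_eq] at hx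
  obtain ⟨ι, t, w, z, hw0, hw1, hz, hcm⟩ := hx
  have hx_eq : x = ∑ i ∈ t, w i • z i := by
    rw [← hcm, Finset.centerMass_eq_of_sum_1 _ _ hw1]
  have hdx : dotp c x = ∑ i ∈ t, w i * dotp c (z i) := by
    rw [hx_eq]
    have := (isLinearMap_dotp c).mk'
    rw [show dotp c = (IsLinearMap.mk' _ (isLinearMap_dotp c) : (Fin d → ℝ) →ₗ[ℝ] ℝ) from rfl]
    rw [map_sum]
    simp
  have hczle : ∀ i ∈ t, dotp c (z i) ≤ M := by
    intro i hi
    obtain ⟨p, q, hpq, hzi⟩ := hz i hi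
    rw [hzi, dotp_rho c hpq.ne]; exact hle p q hpq
  have hsum0 : ∑ i ∈ t, w i * (M - dotp c (z i)) = 0 := by
    have : ∑ i ∈ t, w i * (M - dotp c (z i))
        = (∑ i ∈ t, w i) * M - ∑ i ∈ t, w i * dotp c (z i) := by
      rw [Finset.sum_mul, ← Finset.sum_sub_distrib]
      congr 1; funext i; ring
    rw [this, hw1, ← hdx, hxM]; ring
  have hzero : ∀ i ∈ t, w i * (M - dotp c (z i)) = 0 := by
    intro i hi
    have hnn : ∀ i ∈ t, 0 ≤ w i * (M - dotp c (z i)) := fun i hi =>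
      mul_nonneg (hw0 i hi) (by linarith [hczle i hi])
    exact (Finset.sum_eq_zero_iff_of_nonneg hnn).1 hsum0 i hi
  have hmem : ∀ i ∈ t.filter (fun i => w i ≠ 0), z i ∈ ({e, f} : Set (Fin d → ℝ)) := by
    intro i hi
    rw [Finset.mem_filter] at hi
    obtain ⟨hit, hwi⟩ := hi
    have h0 := hzero i hit
    have hM : dotp c (z i) = M := by
      rcases mul_eq_zero.1 h0 with h | h
      · exact absurd h hwi
      · linarith
    obtain ⟨p, q, hpq, hzi⟩ := hz i hit
    rw [hzi, dotp_rho c hpq.ne] at hM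
    rcases heq p q hpq hM with h | h
    · rw [hzi, h]; exact Set.mem_insert _ _
    · rw [hzi, h]; exact Set.mem_insert_iff.2 (Or.inr rfl)
  have hwpos : (0:ℝ) < ∑ i ∈ t.filter (fun i => w i ≠ 0), w i := by
    rw [Finset.sum_filter_ne_zero, hw1]; norm_num
  have := Finset.centerMass_mem_convexHull (t.filter (fun i => w i ≠ 0))
    (fun i hi => hw0 i (Finset.mem_filter.1 hi).1) hwpos hmem
  rwa [Finset.centerMass_filter_ne_zero, hcm] at this

end aux

section key

variable {d : ℕ}

/-- Core lemma: if the segment `[ρ(i,j), ρ(k,l)]` is a face of the edge polytope (witnessed by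
the supporting functional `c` with value `M`), with `(i,j)` positive and `(k,l)` negative, and
some coordinate `t0` separates the two, then integrality of the positive piece fails. -/
lemma key (G : SimpleGraph (Fin d)) (a : Fin d → ℝ)
    (hdec : Decomposes (edgePolytope G) a 0)
    (i j k l : Fin d) (hij : G.Adj i j) (hkl : G.Adj k l)
    (hpos : 0 < a i + a j) (hneg : a k + a l < 0)
    (c : Fin d → ℝ) (M : ℝ)
    (hle : ∀ p q, G.Adj p q → c p + c q ≤ M)
    (heq : ∀ p q, G.Adj p q → c p + c q = M → rho p q = rho i j ∨ rho p q = rho k l)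
    (hMe : c i + c j = M) (hMf : c k + c l = M)
    (t0 : Fin d) (ht0 : rho i j t0 + rho k l t0 = 1) : False := by
  set e : Fin d → ℝ := rho i j with he
  set f : Fin d → ℝ := rho k l with hf
  have hA : dotp a e = a i + a j := dotp_rho a hij.ne
  have hB : dotp a f = a k + a l := dotp_rho a hkl.ne
  set A : ℝ := a i + a j
  set B : ℝ := a k + a l
  have hAB : 0 < A - B := by linarith
  set τ : ℝ := -B / (A - B) with hτ
  have hτ0 : 0 < τ := div_pos (by linarith) hAB
  have hτ1 : τ < 1 := by
    rw [hτ, div_lt_one hAB]; linarith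
  set x : Fin d → ℝ := τ • e + (1 - τ) • f with hx
  have hdax : dotp a x = 0 := by
    rw [hx, dotp_add, dotp_smul, dotp_smul, hA, hB, hτ]
    field_simp
    ring
  have hdcx : dotp c x = M := by
    have hce : dotp c e = M := by rw [he, dotp_rho c hij.ne, hMe]
    have hcf : dotp c f = M := by rw [hf, dotp_rho c hkl.ne, hMf]
    rw [hx, dotp_add, dotp_smul, dotp_smul, hce, hcf]; ring
  have hxP : x ∈ edgePolytope G :=
    (convex_convexHull ℝ _) (rho_mem G hij) (rho_mem G hkl) hτ0.le (by linarith) (by ring)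
  -- any point of the positive piece with c-value M and a-value 0 equals x
  have hseg : ∀ y ∈ edgePolytope G, dotp c y = M → dotp a y = 0 → y = x := by
    intro y hyP hyM hy00
    have hyseg : y ∈ convexHull ℝ ({e, f} : Set (Fin d → ℝ)) :=
      face_lemma G c M e f hle heq hyP hyM
    rw [convexHull_pair] at hyseg
    obtain ⟨u, v, hu, hv, huv, hyuv⟩ := hyseg
    have hday : dotp a y = u * A + v * B := by
      rw [← hyuv, dotp_add, dotp_smul, dotp_smul, hA, hB]
    have hv' : v = 1 - u := by linarith
    have hy0' : u * A + (1 - u) * B = 0 := by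
      rw [hday, hv'] at hy00; linarith [hy00]
    have hu_eq : u = τ := by
      rw [hτ, eq_div_iff (ne_of_gt hAB)]
      linear_combination hy0'
    rw [← hyuv, hv', hu_eq, hx]
  have hxext : x ∈ Set.extremePoints ℝ (edgePolytope G ∩ {y | 0 ≤ dotp a y}) := by
    rw [mem_extremePoints]
    refine ⟨⟨hxP, by simp [hdax]⟩, ?_⟩
    rintro y ⟨hyP, hy0⟩ z ⟨hzP, hz0⟩ hxyz
    obtain ⟨u, v, hu, hv, huv, hyz⟩ := hxyz
    have hy0' : 0 ≤ dotp a y := hy0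
    have hz0' : 0 ≤ dotp a z := hz0
    have hdc : u * dotp c y + v * dotp c z = M := by
      rw [← hdcx, ← hyz, dotp_add, dotp_smul, dotp_smul]
    have hcyle := hull_le G c M hle y hyP
    have hczle := hull_le G c M hle z hzP
    have t3 : u * (M - dotp c y) + v * (M - dotp c z) = 0 := by
      linear_combination M * huv - hdc
    have t1 : 0 ≤ u * (M - dotp c y) := mul_nonneg hu.le (by linarith)
    have t2 : 0 ≤ v * (M - dotp c z) := mul_nonneg hv.le (by linarith)
    have hcy : dotp c y = M := by
      have h : u * (M - dotp c y) = 0 := by linarith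
      have := (mul_eq_zero.1 h).resolve_left (ne_of_gt hu); linarith
    have hcz : dotp c z = M := by
      have h : v * (M - dotp c z) = 0 := by linarith
      have := (mul_eq_zero.1 h).resolve_left (ne_of_gt hv); linarith
    have hda : u * dotp a y + v * dotp a z = 0 := by
      rw [← hdax, ← hyz, dotp_add, dotp_smul, dotp_smul]
    have s1 : 0 ≤ u * dotp a y := mul_nonneg hu.le hy0'
    have s2 : 0 ≤ v * dotp a z := mul_nonneg hv.le hz0'
    have hay : dotp a y = 0 := by
      have h : u * dotp a y = 0 := by linarith
      have := (mul_eq_zero.1 h).resolve_left (ne_of_gt hu); linarith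
    have haz : dotp a z = 0 := by
      have h : v * dotp a z = 0 := by linarith
      have := (mul_eq_zero.1 h).resolve_left (ne_of_gt hv); linarith
    exact ⟨hseg y hyP hcy hay, hseg z hzP hcz haz⟩
  -- integrality contradiction at coordinate t0
  obtain ⟨zz, hzz⟩ := hdec.2.2.2.1 x hxext t0
  have h1 : e t0 = 0 ∨ e t0 = 1 ∨ e t0 = 2 := by
    rw [he]; unfold rho; split_ifs <;> norm_num
  have h2 : f t0 = 0 ∨ f t0 = 1 ∨ f t0 = 2 := by
    rw [hf]; unfold rho; split_ifs <;> norm_num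
  have ht0' : e t0 + f t0 = 1 := ht0
  have hx0 : x t0 = τ * e t0 + (1 - τ) * f t0 := by rw [hx]; simp
  have hxt0 : x t0 = τ ∨ x t0 = 1 - τ := by
    rcases h1 with h1 | h1 | h1 <;> rcases h2 with h2 | h2 | h2 <;>
      rw [h1, h2] at hx0 ht0' <;> first
      | (left; rw [hx0]; simp; done)
      | (right; rw [hx0]; simp; done)
      | (exfalso; norm_num at ht0')
  have hb : (0:ℝ) < (zz:ℝ) ∧ (zz:ℝ) < 1 := by
    rcases hxt0 with h | h <;> rw [h] at hzz <;> constructor <;> linarith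
  have h0 : 0 < zz := by exact_mod_cast hb.1
  have h1 : zz < 1 := by exact_mod_cast hb.2
  omega

end key

section config

variable {d : ℕ}

/-- A positive edge and a negative edge cannot share a vertex. -/
lemma shared (G : SimpleGraph (Fin d)) (a : Fin d → ℝ)
    (hdec : Decomposes (edgePolytope G) a 0)
    (i j l : Fin d) (hij : G.Adj i j) (hjl : G.Adj j l)
    (hpos : 0 < a i + a j) (hneg : a j + a l < 0) : False := by
  have hij' : i ≠ j := hij.ne
  have hjl' : j ≠ l := hjl.ne
  have hil : i ≠ l := by rintro rfl; linarith
  set c : Fin d → ℝ :=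
    fun t => (if t = i then 1 else 0) + (if t = j then 2 else 0) + (if t = l then 1 else 0)
    with hc
  have hci : c i = 1 := by simp [hc, hij', hil]
  have hcj : c j = 2 := by simp [hc, Ne.symm hij', hjl']
  have hcl : c l = 1 := by simp [hc, Ne.symm hil, Ne.symm hjl']
  have hc0 : ∀ t, t ≠ i → t ≠ j → t ≠ l → c t = 0 := by
    intro t h1 h2 h3; simp [hc, h1, h2, h3]
  have hval : ∀ t, (t = j ∧ c t = 2) ∨ ((t = i ∨ t = l) ∧ c t = 1) ∨ c t = 0 := by
    intro t
    by_cases h1 : t = i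
    · exact Or.inr (Or.inl ⟨Or.inl h1, by rw [h1, hci]⟩)
    by_cases h2 : t = j
    · exact Or.inl ⟨h2, by rw [h2, hcj]⟩
    by_cases h3 : t = l
    · exact Or.inr (Or.inl ⟨Or.inr h3, by rw [h3, hcl]⟩)
    · exact Or.inr (Or.inr (hc0 t h1 h2 h3))
  have hle : ∀ p q, G.Adj p q → c p + c q ≤ 3 := by
    intro p q hpq
    rcases hval p with ⟨hp, hcp⟩ | ⟨hp, hcp⟩ | hcp <;>
      rcases hval q with ⟨hq, hcq⟩ | ⟨hq, hcq⟩ | hcq <;>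
      rw [hcp, hcq] <;>
      first
        | (norm_num; done)
        | (exact absurd (hp.trans hq.symm) hpq.ne)
  have heq : ∀ p q, G.Adj p q → c p + c q = 3 → rho p q = rho i j ∨ rho p q = rho j l := by
    intro p q hpq hsum
    rcases hval p with ⟨hp, hcp⟩ | ⟨hp, hcp⟩ | hcp
    · rcases hval q with ⟨hq, hcq⟩ | ⟨hq, hcq⟩ | hcq
      · rw [hcp, hcq] at hsum; norm_num at hsum
      · rcases hq with hq | hq
        · rw [hp, hq]; left; exact rho_comm j i
        · rw [hp, hq]; right; rfl
      · rw [hcp, hcq] at hsum; norm_num at hsum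
    · rcases hval q with ⟨hq, hcq⟩ | ⟨hq, hcq⟩ | hcq
      · rcases hp with hp | hp
        · rw [hp, hq]; left; rfl
        · rw [hp, hq]; right; exact rho_comm l j
      · rw [hcp, hcq] at hsum; norm_num at hsum
      · rw [hcp, hcq] at hsum; norm_num at hsum
    · rw [hcp] at hsum
      rcases hval q with ⟨hq, hcq⟩ | ⟨hq, hcq⟩ | hcq <;> rw [hcq] at hsum <;> norm_num at hsum
  have hMe : c i + c j = 3 := by rw [hci, hcj]; norm_num
  have hMf : c j + c l = 3 := by rw [hcj, hcl]; norm_num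
  have ht0 : rho i j i + rho j l i = 1 := by
    simp [rho, hij', hil]
  exact key G a hdec i j j l hij hjl hpos hneg c 3 hle heq hMe hMf i ht0

end config

section cover

variable {d : ℕ}

lemma dotp_neg (a x : Fin d → ℝ) : dotp (-a) x = -dotp a x := by
  simp [dotp, Finset.sum_neg_distrib]

lemma Decomposes_neg {P : Set (Fin d → ℝ)} {a : Fin d → ℝ}
    (h : Decomposes P a 0) : Decomposes P (-a) 0 := by
  obtain ⟨⟨x, hx, hx0⟩, ⟨y1, hy1, hy1'⟩, ⟨y2, hy2, hy2'⟩, h1, h2⟩ := h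
  refine ⟨⟨x, hx, by rw [dotp_neg, hx0]; ring⟩,
    ⟨y2, hy2, by rw [dotp_neg]; linarith⟩,
    ⟨y1, hy1, by rw [dotp_neg]; linarith⟩, ?_, ?_⟩
  · have hset : {x : Fin d → ℝ | (0:ℝ) ≤ dotp (-a) x} = {x | dotp a x ≤ 0} := by
      ext t; simp [dotp_neg, neg_nonneg]
    rw [hset]; exact h2
  · have hset : {x : Fin d → ℝ | dotp (-a) x ≤ 0} = {x | (0:ℝ) ≤ dotp a x} := by
      ext t; simp [dotp_neg, neg_nonpos]
    rw [hset]; exact h1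

/-- If `(i,j)` is positive, `(k,l)` is negative, the edges are disjoint, and every edge between
`{i,j}` and `{k,l}` contains `i`, we get a contradiction. -/
lemma coverlem (G : SimpleGraph (Fin d)) (a : Fin d → ℝ)
    (hdec : Decomposes (edgePolytope G) a 0)
    (i j k l : Fin d) (hij : G.Adj i j) (hkl : G.Adj k l)
    (hpos : 0 < a i + a j) (hneg : a k + a l < 0)
    (hik : i ≠ k) (hil : i ≠ l) (hjk : j ≠ k) (hjl : j ≠ l)
    (hcov : ∀ p q, G.Adj p q → (p = i ∨ p = j) → (q = k ∨ q = l) → p = i) : False := by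
  have hij' : i ≠ j := hij.ne
  have hkl' : k ≠ l := hkl.ne
  set c : Fin d → ℝ :=
    fun t => (if t = i then 1 else 0) + (if t = j then 3 else 0) +
      (if t = k then 2 else 0) + (if t = l then 2 else 0) with hc
  have hci : c i = 1 := by simp [hc, hij', hik, hil]
  have hcj : c j = 3 := by simp [hc, Ne.symm hij', hjk, hjl]
  have hck : c k = 2 := by simp [hc, Ne.symm hik, Ne.symm hjk, hkl']
  have hcl : c l = 2 := by simp [hc, Ne.symm hil, Ne.symm hjl, Ne.symm hkl']
  have hc0 : ∀ t, t ≠ i → t ≠ j → t ≠ k → t ≠ l → c t = 0 := by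
    intro t h1 h2 h3 h4; simp [hc, h1, h2, h3, h4]
  have hval : ∀ t, (t = i ∧ c t = 1) ∨ (t = j ∧ c t = 3) ∨ ((t = k ∨ t = l) ∧ c t = 2) ∨
      c t = 0 := by
    intro t
    by_cases h1 : t = i
    · exact Or.inl ⟨h1, by rw [h1, hci]⟩
    by_cases h2 : t = j
    · exact Or.inr (Or.inl ⟨h2, by rw [h2, hcj]⟩)
    by_cases h3 : t = k
    · exact Or.inr (Or.inr (Or.inl ⟨Or.inl h3, by rw [h3, hck]⟩))
    by_cases h4 : t = l
    · exact Or.inr (Or.inr (Or.inl ⟨Or.inr h4, by rw [h4, hcl]⟩))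
    · exact Or.inr (Or.inr (Or.inr (hc0 t h1 h2 h3 h4)))
  -- a cross edge from j is impossible
  have hnocross : ∀ p q, G.Adj p q → p = j → (q = k ∨ q = l) → False := by
    intro p q hpq hp hq
    have h := hcov p q hpq (Or.inr hp) hq
    rw [hp] at h
    exact hij' h.symm
  have hle : ∀ p q, G.Adj p q → c p + c q ≤ 4 := by
    intro p q hpq
    rcases hval p with ⟨hp, hcp⟩ | ⟨hp, hcp⟩ | ⟨hp, hcp⟩ | hcp <;>
      rcases hval q with ⟨hq, hcq⟩ | ⟨hq, hcq⟩ | ⟨hq, hcq⟩ | hcq <;>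
      rw [hcp, hcq] <;>
      first
        | (norm_num; done)
        | (exact absurd (hp.trans hq.symm) hpq.ne)
        | (exact absurd (hnocross p q hpq hp hq) id)
        | (exact absurd (hnocross q p hpq.symm hq hp) id)
  have heq : ∀ p q, G.Adj p q → c p + c q = 4 → rho p q = rho i j ∨ rho p q = rho k l := by
    intro p q hpq hsum
    rcases hval p with ⟨hp, hcp⟩ | ⟨hp, hcp⟩ | ⟨hp, hcp⟩ | hcp <;>
      rcases hval q with ⟨hq, hcq⟩ | ⟨hq, hcq⟩ | ⟨hq, hcq⟩ | hcq <;>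
      rw [hcp, hcq] at hsum <;>
      first
        | (norm_num at hsum; done)
        | (left; rw [hp, hq]; done)
        | (left; rw [hp, hq]; exact rho_comm j i)
        | (rcases hp with hp | hp <;> rcases hq with hq | hq
           · exact absurd (hp.trans hq.symm) hpq.ne
           · right; rw [hp, hq]
           · right; rw [hp, hq]; exact rho_comm l k
           · exact absurd (hp.trans hq.symm) hpq.ne)
  have hMe : c i + c j = 4 := by rw [hci, hcj]; norm_num
  have hMf : c k + c l = 4 := by rw [hck, hcl]; norm_num
  have ht0 : rho i j j + rho k l j = 1 := by
    simp [rho, Ne.symm hij', hjk, hjl]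
  exact key G a hdec i j k l hij hkl hpos hneg c 4 hle heq hMe hMf j ht0

end cover

/-- in a decomposition via the hyperplane a·x = 0, any positive edge and
negative edge are vertex-disjoint and cycle-compatible via two zero edges. -/
theorem stmt3 {d : ℕ} (G : SimpleGraph (Fin d)) (hG : G.Connected) (a : Fin d → ℝ)
    (hdec : Decomposes (edgePolytope G) a 0)
    (i j k l : Fin d) (hij : G.Adj i j) (hkl : G.Adj k l)
    (hpos : 0 < a i + a j) (hneg : a k + a l < 0) :
    (({i, j} : Set (Fin d)) ∩ {k, l} = ∅) ∧
    ∃ p q r s : Fin d, ({p, q} : Set (Fin d)) = {i, j} ∧ ({r, s} : Set (Fin d)) = {k, l} ∧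
      G.Adj q r ∧ G.Adj s p ∧ a q + a r = 0 ∧ a s + a p = 0 := by
  -- part 1: a positive edge and a negative edge never share a vertex
  have noshare : ∀ p q r s : Fin d, G.Adj p q → G.Adj r s → 0 < a p + a q → a r + a s < 0 →
      p ≠ r ∧ p ≠ s ∧ q ≠ r ∧ q ≠ s := by
    intro p q r s hpq hrs hp hn
    refine ⟨?_, ?_, ?_, ?_⟩ <;> intro hEq
    · exact shared G a hdec q p s hpq.symm (hEq ▸ hrs) (by linarith) (by rw [hEq]; linarith)
    · exact shared G a hdec q p r hpq.symm (hEq ▸ hrs.symm) (by linarith)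
        (by rw [hEq]; linarith)
    · exact shared G a hdec p q s hpq (hEq ▸ hrs) (by linarith) (by rw [hEq]; linarith)
    · exact shared G a hdec p q r hpq (hEq ▸ hrs.symm) (by linarith) (by rw [hEq]; linarith)
  obtain ⟨hik, hil, hjk, hjl⟩ := noshare i j k l hij hkl hpos hneg
  -- a connecting edge between the two must be a zero edge
  have hzero : ∀ p q r s : Fin d, G.Adj p q → G.Adj q r → G.Adj r s →
      0 < a p + a q → a r + a s < 0 → a q + a r = 0 := by
    intro p q r s h1 h2 h3 hp hn
    rcases lt_trichotomy (a q + a r) 0 with h | h | h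
    · exact absurd rfl (noshare p q q r h1 h2 hp h).2.2.1
    · exact h
    · exact absurd rfl (noshare q r r s h2 h3 h hn).2.2.1
  constructor
  · ext t
    simp only [Set.mem_inter_iff, Set.mem_insert_iff, Set.mem_singleton_iff,
      Set.mem_empty_iff_false, iff_false, not_and, not_or]
    rintro (rfl | rfl) <;> exact ⟨by exact fun h => absurd h (by assumption),
      by exact fun h => absurd h (by assumption)⟩
  · by_cases h1 : G.Adj j k ∧ G.Adj l i
    · refine ⟨i, j, k, l, rfl, rfl, h1.1, h1.2, ?_, ?_⟩
      · exact hzero i j k l hij h1.1 hkl hpos hneg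
      · have := hzero j i l k hij.symm h1.2.symm hkl.symm (by linarith) (by linarith)
        linarith
    by_cases h2 : G.Adj j l ∧ G.Adj k i
    · refine ⟨i, j, l, k, rfl, Set.pair_comm l k, h2.1, h2.2, ?_, ?_⟩
      · exact hzero i j l k hij h2.1 hkl.symm hpos (by linarith)
      · have := hzero j i k l hij.symm h2.2.symm hkl (by linarith) hneg
        linarith
    exfalso
    push_neg at h1 h2
    by_cases hJK : G.Adj j k
    · by_cases hJL : G.Adj j l
      · -- cover vertex j
        refine coverlem G a hdec j i k l hij.symm hkl (by linarith) hneg hjk hjl hik hil ?_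
        intro p q hpq hp hq
        rcases hp with hp | hp
        · exact hp
        · exfalso
          rcases hq with hq | hq
          · exact h2 hJL (hq ▸ hp ▸ hpq.symm)
          · exact h1 hJK (hq ▸ hp ▸ hpq.symm)
      · -- cover vertex k ; use the decomposition for -a
        have hLI : ¬ G.Adj l i := h1 hJK
        refine coverlem G (-a) (Decomposes_neg hdec) k l i j hkl hij
          (by simp only [Pi.neg_apply]; linarith)
          (by simp only [Pi.neg_apply]; linarith)
          (Ne.symm hik) (Ne.symm hjk) (Ne.symm hil) (Ne.symm hjl) ?_
        intro p q hpq hp hq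
        rcases hp with hp | hp
        · exact hp
        · exfalso
          rcases hq with hq | hq
          · exact hLI (hq ▸ hp ▸ hpq)
          · exact hJL (hq ▸ hp ▸ hpq.symm)
    · by_cases hJL : G.Adj j l
      · -- cover vertex l
        have hKI : ¬ G.Adj k i := h2 hJL
        refine coverlem G (-a) (Decomposes_neg hdec) l k i j hkl.symm hij
          (by simp only [Pi.neg_apply]; linarith)
          (by simp only [Pi.neg_apply]; linarith)
          (Ne.symm hil) (Ne.symm hjl) (Ne.symm hik) (Ne.symm hjk) ?_
        intro p q hpq hp hq
        rcases hp with hp | hp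
        · exact hp
        · exfalso
          rcases hq with hq | hq
          · exact hKI (hq ▸ hp ▸ hpq)
          · exact hJK (hq ▸ hp ▸ hpq.symm)
      · -- cover vertex i
        refine coverlem G a hdec i j k l hij hkl hpos hneg hik hil hjk hjl ?_
        intro p q hpq hp hq
        rcases hp with hp | hp
        · exact hp
        · exfalso
          rcases hq with hq | hq
          · exact hJK (hq ▸ hp ▸ hpq)
          · exact hJL (hq ▸ hp ▸ hpq)
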